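/- For any almost Kähler manifold (M,g,J), the identity 2⟨ρ,φ⟩ = ⟨∇_{Ric(X_k)}Ω, ∇_{X^k}Ω⟩ holds, where (X_1,…,X_n) is any local orthonormal frame with summation over repeated indices. -/

import Mathlib

/-!
Framework: an almost Kähler manifold `(M, g, J)` of dimension `n`, presented through
the components, in local orthonormal frames, of its basic geometric data (Mathlib has
no Levi-Civita connection, so the covariant derivatives and the curvature operator are
recorded as data subject to their defining identities).  The tangent spaces are modelled
on `ℝⁿ` with its standard inner product (the metric `g` in an orthonormal frame), the
standard basis playing the role of the local orthonormal frame `(X_1, …, X_n)`.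
-/

noncomputable section

open scoped InnerProductSpace
open MeasureTheory

/-- The model of the tangent spaces: `ℝⁿ` with its standard inner product `g`. -/
abbrev EV (n : ℕ) := EuclideanSpace ℝ (Fin n)

/-- The (local orthonormal) frame `X_k`: the standard basis of `ℝⁿ`. -/
def fr (n : ℕ) (k : Fin n) : EV n := EuclideanSpace.single k 1

/-- An almost Kähler manifold `(M, g, J)` of dimension `n`, recorded through the frame
components of its geometric data: the Riemannian volume measure `vol` (the measure of the
volume form `ω = Ωᵐ/m!`), the almost complex structure `J`, the Riemann curvature operator
`R x X Y Z = (∇²_{X,Y} − ∇²_{Y,X})Z`, the covariant derivatives `covJ x X Y = (∇_X J)Y`,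
`cov2J x X Y Z = (∇²_{X,Y} J)Z`, `covRic x X Y = (∇_X Ric)Y`,
`cov2Ric x X Y Z = (∇²_{X,Y} Ric)Z`, and the divergence operator `div` on vector fields.
The axioms record:  `J² = −1`, `g(JX, JY) = g(X, Y)`, skew-adjointness of `∇_X J` and
`{∇_X J, J} = 0` (derivatives of the previous two), the symmetries and the first Bianchi
identity of `R`, the Ricci identities for `∇²J` and `∇²Ric`, the quasi-Kähler identity
`∇_{JX} J = ∇_X J ∘ J`, the almost Kähler condition `dΩ = 0` in its equivalent form (6),
its consequences `δΩ = 0`, i.e. `(∇_{X_k} J)X^k = 0`, and `(∇²_{X,X_k} J)X^k = 0`. -/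
structure AKManifold (n : ℕ) (M : Type) [TopologicalSpace M] [MeasurableSpace M] where
  vol : Measure M
  J : M → EV n → EV n
  R : M → EV n → EV n → EV n → EV n
  covJ : M → EV n → EV n → EV n
  cov2J : M → EV n → EV n → EV n → EV n
  covRic : M → EV n → EV n → EV n
  cov2Ric : M → EV n → EV n → EV n → EV n
  div : (M → EV n) → M → ℝ
  J_sq : ∀ x X, J x (J x X) = -X
  J_isom : ∀ x X Y, ⟪J x X, J x Y⟫_ℝ = ⟪X, Y⟫_ℝ
  covJ_skew : ∀ x X Y Z, ⟪covJ x X Y, Z⟫_ℝ = -⟪Y, covJ x X Z⟫_ℝ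
  covJ_antiJ : ∀ x X Y, covJ x X (J x Y) + J x (covJ x X Y) = 0
  R_antisym : ∀ x X Y Z, R x Y X Z = - R x X Y Z
  R_skewadj : ∀ x X Y Z W, ⟪R x X Y Z, W⟫_ℝ = -⟪R x X Y W, Z⟫_ℝ
  R_pair : ∀ x X Y Z W, ⟪R x X Y Z, W⟫_ℝ = ⟪R x Z W X, Y⟫_ℝ
  R_bianchi : ∀ x X Y Z, R x X Y Z + R x Y Z X + R x Z X Y = 0
  cov2J_comm : ∀ x X Y Z,
    cov2J x X Y Z - cov2J x Y X Z = R x X Y (J x Z) - J x (R x X Y Z)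
  cov2Ric_comm : ∀ x X Y Z,
    cov2Ric x X Y Z - cov2Ric x Y X Z
      = R x X Y (∑ k, R x Z (fr n k) (fr n k)) - ∑ k, R x (R x X Y Z) (fr n k) (fr n k)
  quasiKahler : ∀ x X Y, covJ x (J x X) Y = covJ x X (J x Y)
  omega_closed : ∀ x X Y Z,
    ⟪covJ x X Y, Z⟫_ℝ + ⟪covJ x Y Z, X⟫_ℝ + ⟪covJ x Z X, Y⟫_ℝ = 0
  omega_coclosed : ∀ x, (∑ k, covJ x (fr n k) (fr n k)) = 0
  cov2J_coclosed : ∀ x X, (∑ k, cov2J x X (fr n k) (fr n k)) = 0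

namespace AKManifold

variable {n : ℕ} {M : Type} [TopologicalSpace M] [MeasurableSpace M] (a : AKManifold n M)

/-- The Ricci endomorphism `Ric(X) = R(X, X_k)X^k`. -/
def Ric (x : M) (X : EV n) : EV n := ∑ k, a.R x X (fr n k) (fr n k)

/-- The star Ricci endomorphism `Ric⋆(X) = R(JX, JX_k)X^k`. -/
def RicStar (x : M) (X : EV n) : EV n := ∑ k, a.R x (a.J x X) (a.J x (fr n k)) (fr n k)

/-- `Ric⁺ = ½(Ric − J∘Ric∘J)`. -/
def RicP (x : M) (X : EV n) : EV n := (2:ℝ)⁻¹ • (a.Ric x X - a.J x (a.Ric x (a.J x X)))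

/-- `Ric⁻ = ½(Ric + J∘Ric∘J)`. -/
def RicM (x : M) (X : EV n) : EV n := (2:ℝ)⁻¹ • (a.Ric x X + a.J x (a.Ric x (a.J x X)))

/-- `Ric⁺⋆ = ½(Ric⋆ − J∘Ric⋆∘J)`. -/
def RicStarP (x : M) (X : EV n) : EV n :=
  (2:ℝ)⁻¹ • (a.RicStar x X - a.J x (a.RicStar x (a.J x X)))

/-- `Ric⁻⋆ = ½(Ric⋆ + J∘Ric⋆∘J)`. -/
def RicStarM (x : M) (X : EV n) : EV n :=
  (2:ℝ)⁻¹ • (a.RicStar x X + a.J x (a.RicStar x (a.J x X)))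

/-- The scalar curvature `S = tr(Ric)`. -/
def S (x : M) : ℝ := ∑ k, ⟪a.Ric x (fr n k), fr n k⟫_ℝ

/-- The star scalar curvature `S⋆ = tr(Ric⋆)`. -/
def SStar (x : M) : ℝ := ∑ k, ⟪a.RicStar x (fr n k), fr n k⟫_ℝ

/-- The scalar product `⟨A, B⟩ = tr(A ∘ B*)` of endomorphisms, in frame components. -/
def einner (A B : EV n → EV n) : ℝ := ∑ k, ⟪A (fr n k), B (fr n k)⟫_ℝ

/-- `|A|² = ⟨A, A⟩` for endomorphisms. -/
def enormSq (A : EV n → EV n) : ℝ := einner A A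

/-- The scalar product `⟨ξ, η⟩ = ½ ξ(X_k, X_l)·η(X^k, X^l)` of `2`-forms. -/
def finner (ξ η : EV n → EV n → ℝ) : ℝ :=
  (2:ℝ)⁻¹ * ∑ k, ∑ l, ξ (fr n k) (fr n l) * η (fr n k) (fr n l)

/-- `|ξ|² = ⟨ξ, ξ⟩` for `2`-forms. -/
def fnormSq (ξ : EV n → EV n → ℝ) : ℝ := finner ξ ξ

/-- The curvature endomorphism `R̃(X,Y) = ¼ [R(X,Y) − R(JX,JY), J] ∘ J`, applied to `Z`. -/
def Rt (x : M) (X Y Z : EV n) : EV n :=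
  (4:ℝ)⁻¹ • ((a.R x X Y (a.J x (a.J x Z)) - a.R x (a.J x X) (a.J x Y) (a.J x (a.J x Z)))
    - a.J x (a.R x X Y (a.J x Z) - a.R x (a.J x X) (a.J x Y) (a.J x Z)))

/-- `R̃⁻(X,Y) = ½(R̃(X,Y) − R̃(JX,Y) ∘ J)`, applied to `Z`. -/
def RtMinus (x : M) (X Y Z : EV n) : EV n :=
  (2:ℝ)⁻¹ • (a.Rt x X Y Z - a.Rt x (a.J x X) Y (a.J x Z))

/-- `|R̃|² = Σ_{k,l} |R̃(X_k, X_l)|²`. -/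
def RtNormSq (x : M) : ℝ := ∑ k, ∑ l, enormSq (a.Rt x (fr n k) (fr n l))

/-- `|R̃⁻|² = Σ_{k,l} |R̃⁻(X_k, X_l)|²`. -/
def RtMinusNormSq (x : M) : ℝ := ∑ k, ∑ l, enormSq (a.RtMinus x (fr n k) (fr n l))

/-- `R̃ic = −¼ ∇_{X_k} J ∘ ∇_{X^k} J`, applied to `X`. -/
def Rict (x : M) (X : EV n) : EV n :=
  -(4:ℝ)⁻¹ • ∑ k, a.covJ x (fr n k) (a.covJ x (fr n k) X)

/-- `R̃ic(X) = R̃(X, X_k)X^k` (equivalently, `R̃ic = −¼ ∇_{X_k} J ∘ ∇_{X^k} J`). -/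
def RictR (x : M) (X : EV n) : EV n := ∑ k, a.Rt x X (fr n k) (fr n k)

/-- The `J`-invariant `2`-form `φ(X,Y) = ½ tr(∇_X J ∘ ∇_{JY} J)`. -/
def phi (x : M) (X Y : EV n) : ℝ :=
  (2:ℝ)⁻¹ * ∑ k, ⟪a.covJ x X (a.covJ x (a.J x Y) (fr n k)), fr n k⟫_ℝ

/-- The Ricci form `ρ(X,Y) = g((J ∘ Ric⁺)X, Y)`. -/
def rho (x : M) (X Y : EV n) : ℝ := ⟪a.J x (a.RicP x X), Y⟫_ℝ

/-- The `2`-form `∇_V Ω`, i.e. `(∇_V Ω)(Y,Z) = g((∇_V J)Y, Z)`. -/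
def covOmega (x : M) (V Y Z : EV n) : ℝ := ⟪a.covJ x V Y, Z⟫_ℝ

/-- `|∇Ω|² = Σ_k |∇_{X_k} Ω|²`. -/
def covOmegaNormSq (x : M) : ℝ := ∑ k, fnormSq (a.covOmega x (fr n k))

/-- The Bochner Laplacian `∇*∇J = −∇²_{X_k, X^k} J`, applied to `X`. -/
def bochnerJ (x : M) (X : EV n) : EV n := -∑ k, a.cov2J x (fr n k) (fr n k) X

/-- The `2`-form `∇*∇Ω`, i.e. `(∇*∇Ω)(Y,Z) = g((∇*∇J)Y, Z)`. -/
def bochnerOmega (x : M) (Y Z : EV n) : ℝ := ⟪a.bochnerJ x Y, Z⟫_ℝ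

/-- The vector-valued `2`-form `v(X,Y) = (∇_X J)Y − (∇_Y J)X`. -/
def vphi (x : M) (X Y : EV n) : EV n := a.covJ x X Y - a.covJ x Y X

/-- The commutator `[∇_X Ric, J]`, applied to `W`. -/
def covRicBr (x : M) (X W : EV n) : EV n :=
  a.covRic x X (a.J x W) - a.J x (a.covRic x X W)

/-- The vector-valued `2`-form
`ψ(X,Y) = ⅛([∇_X Ric, J]Y − [∇_Y Ric, J]X − [∇_{JX} Ric, J]JY + [∇_{JY} Ric, J]JX)`. -/
def psi (x : M) (X Y : EV n) : EV n :=
  (8:ℝ)⁻¹ • (a.covRicBr x X Y - a.covRicBr x Y X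
    - a.covRicBr x (a.J x X) (a.J x Y) + a.covRicBr x (a.J x Y) (a.J x X))

/-- `⟨v, ψ⟩ = ½ g(v(X^k, X^l), ψ(X_k, X_l))`. -/
def vpsi (x : M) : ℝ :=
  (2:ℝ)⁻¹ * ∑ k, ∑ l, ⟪a.vphi x (fr n k) (fr n l), a.psi x (fr n k) (fr n l)⟫_ℝ

/-- The function `q(J) = g((∇²_{X_k, X_l} Ric)JX^k, JX^l)`. -/
def qJ (x : M) : ℝ :=
  ∑ k, ∑ l, ⟪a.cov2Ric x (fr n k) (fr n l) (a.J x (fr n k)), a.J x (fr n l)⟫_ℝ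

/-- The number `Q(J) = ∫_M q(J) ω`. -/
def QJ : ℝ := ∫ x, a.qJ x ∂a.vol

/-- The vector field `V₂ = g(Ric(X^l), (J ∘ ∇_{X_l} J)X^k) · X_k`. -/
def V2 (x : M) : EV n :=
  ∑ k, (∑ l, ⟪a.Ric x (fr n l), a.J x (a.covJ x (fr n l) (fr n k))⟫_ℝ) • fr n k

/-- Semi-positivity (`A ≥ 0`) of an endomorphism field. -/
def SemiPos (A : M → EV n → EV n) : Prop := ∀ x X, 0 ≤ ⟪A x X, X⟫_ℝ

/-- Semi-negativity (`A ≤ 0`) of an endomorphism field. -/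
def SemiNeg (A : M → EV n → EV n) : Prop := ∀ x X, ⟪A x X, X⟫_ℝ ≤ 0

/-- `(M, g, J)` is Kähler: `∇J = 0`. -/
def IsKahler : Prop := ∀ x X Y, a.covJ x X Y = 0

/-- `(M, g, J)` is Einstein: `Ric = (S/n) · id`. -/
def IsEinstein : Prop := ∀ x X, a.Ric x X = (a.S x / (n : ℝ)) • X

end AKManifold

/-!
Closedness of `Ω` gives `g((∇_V J)Y, Z) = g(V, v(Z,Y))`, so `B(U,V) := ⟨∇_U Ω, ∇_V Ω⟩` is the
Gram form `½ Σ_{k,l} g(U, v_{lk}) g(V, v_{lk})` of the vectors `v_{lk} = v(X_l, X_k)`, and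
`Σ_k B(A X_k, X_k) = ½ Σ_{k,l} g(A v_{lk}, v_{lk})` for every symmetric `A`; the right-hand side
is this expression for `A = Ric`. Skewness of `∇_X J` gives `φ(X,Y) = −B(JY, X)`, whence
`2⟨ρ,φ⟩ = Σ_k B(Ric⁺ X_k, X_k)`. The quasi-Kähler identity makes `B` `J`-invariant, so the
family `(J v_{lk})` has the same Gram form as `(v_{lk})`, and the `J ∘ Ric ∘ J` half of `Ric⁺`
contributes exactly as much as the `Ric` half.
-/

namespace OrthonormalBasis

variable {ι E : Type*} [Fintype ι] [NormedAddCommGroup E] [InnerProductSpace ℝ E]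

theorem sum_inner_apply_mul_inner_of_symm (b : OrthonormalBasis ι ℝ E) {A : E → E}
    (hA : ∀ u v, ⟪A u, v⟫_ℝ = ⟪u, A v⟫_ℝ) (w : E) :
    ∑ i, ⟪A (b i), w⟫_ℝ * ⟪b i, w⟫_ℝ = ⟪A w, w⟫_ℝ := by
  simp_rw [hA, real_inner_comm (A w)]
  exact b.sum_inner_mul_inner (A w) w

end OrthonormalBasis

namespace AKManifold

variable {n : ℕ}

theorem coe_basisFun : ⇑(EuclideanSpace.basisFun (Fin n) ℝ) = fr n :=
  funext fun k => EuclideanSpace.basisFun_apply (Fin n) ℝ k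

theorem sum_inner_fr_mul_inner_fr (u v : EV n) :
    ∑ k, ⟪u, fr n k⟫_ℝ * ⟪fr n k, v⟫_ℝ = ⟪u, v⟫_ℝ := by
  simpa only [coe_basisFun] using (EuclideanSpace.basisFun (Fin n) ℝ).sum_inner_mul_inner u v

theorem sum_inner_fr_apply_mul_inner_fr {A : EV n → EV n}
    (hA : ∀ u v, ⟪A u, v⟫_ℝ = ⟪u, A v⟫_ℝ) (w : EV n) :
    ∑ k, ⟪A (fr n k), w⟫_ℝ * ⟪fr n k, w⟫_ℝ = ⟪A w, w⟫_ℝ := by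
  simpa only [coe_basisFun] using
    (EuclideanSpace.basisFun (Fin n) ℝ).sum_inner_apply_mul_inner_of_symm hA w

variable {M : Type} [TopologicalSpace M] [MeasurableSpace M] (a : AKManifold n M) (x : M)

theorem inner_J_left (u v : EV n) : ⟪a.J x u, v⟫_ℝ = -⟪u, a.J x v⟫_ℝ := by
  have h := a.J_isom x u (a.J x v)
  rw [a.J_sq, inner_neg_right] at h
  linarith

theorem inner_J_right (u v : EV n) : ⟪u, a.J x v⟫_ℝ = -⟪a.J x u, v⟫_ℝ := by
  rw [inner_J_left, neg_neg]

theorem covJ_J (X Y : EV n) : a.covJ x X (a.J x Y) = -a.J x (a.covJ x X Y) :=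
  eq_neg_of_add_eq_zero_left (a.covJ_antiJ x X Y)

theorem inner_R_self_comm (X Y Z : EV n) : ⟪a.R x X Z Z, Y⟫_ℝ = ⟪a.R x Y Z Z, X⟫_ℝ := by
  have hb := congrArg (⟪·, Z⟫_ℝ) (a.R_bianchi x Z X Y)
  simp only [inner_add_left, inner_zero_left, a.R_antisym x Z Y X, inner_neg_left] at hb
  rw [a.R_pair x X Z Z Y, a.R_pair x Y Z Z X]
  linarith [a.R_skewadj x X Y Z Z]

theorem inner_Ric_comm (X Y : EV n) : ⟪a.Ric x X, Y⟫_ℝ = ⟪X, a.Ric x Y⟫_ℝ := by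
  rw [← real_inner_comm X, Ric, Ric, sum_inner, sum_inner]
  exact Finset.sum_congr rfl fun k _ => a.inner_R_self_comm x X Y (fr n k)

theorem inner_RicP (X Y : EV n) :
    ⟪a.RicP x X, Y⟫_ℝ = 2⁻¹ * (⟪a.Ric x X, Y⟫_ℝ + ⟪a.Ric x (a.J x X), a.J x Y⟫_ℝ) := by
  rw [RicP, real_inner_smul_left, inner_sub_left, inner_J_left]
  ring

theorem inner_RicP_comm (X Y : EV n) : ⟪a.RicP x X, Y⟫_ℝ = ⟪X, a.RicP x Y⟫_ℝ := by
  rw [← real_inner_comm X, inner_RicP, inner_RicP, a.inner_Ric_comm x X,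
    a.inner_Ric_comm x (a.J x X), ← real_inner_comm X, ← real_inner_comm (a.J x X)]

theorem inner_covJ_eq_inner_vphi (V Y Z : EV n) :
    ⟪a.covJ x V Y, Z⟫_ℝ = ⟪V, a.vphi x Z Y⟫_ℝ := by
  rw [vphi, inner_sub_right, real_inner_comm (a.covJ x Y Z) V]
  linarith [a.omega_closed x V Y Z, a.covJ_skew x Z V Y]

theorem finner_covOmega (U V : EV n) :
    finner (a.covOmega x U) (a.covOmega x V)
      = 2⁻¹ * ∑ k, ∑ l, ⟪U, a.vphi x (fr n l) (fr n k)⟫_ℝ * ⟪V, a.vphi x (fr n l) (fr n k)⟫_ℝ := by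
  simp only [finner, covOmega, inner_covJ_eq_inner_vphi]

theorem finner_covOmega_eq_sum_inner (U V : EV n) :
    finner (a.covOmega x U) (a.covOmega x V)
      = 2⁻¹ * ∑ k, ⟪a.covJ x U (fr n k), a.covJ x V (fr n k)⟫_ℝ := by
  simp only [finner, covOmega, real_inner_comm (fr n _) (a.covJ x V _), sum_inner_fr_mul_inner_fr]

theorem finner_covOmega_J_J (U V : EV n) :
    finner (a.covOmega x (a.J x U)) (a.covOmega x (a.J x V))
      = finner (a.covOmega x U) (a.covOmega x V) := by
  simp only [finner_covOmega_eq_sum_inner, quasiKahler, covJ_J, inner_neg_neg, J_isom]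

theorem phi_eq_neg_finner_covOmega (X Y : EV n) :
    a.phi x X Y = -finner (a.covOmega x (a.J x Y)) (a.covOmega x X) := by
  simp only [phi, covJ_skew, finner_covOmega_eq_sum_inner, Finset.sum_neg_distrib]
  ring

theorem phi_eq_sum (Y Z : EV n) :
    a.phi x Y Z = 2⁻¹ * ∑ k, ∑ l,
      ⟪Z, a.J x (a.vphi x (fr n l) (fr n k))⟫_ℝ * ⟪Y, a.vphi x (fr n l) (fr n k)⟫_ℝ := by
  simp only [phi_eq_neg_finner_covOmega, finner_covOmega, inner_J_right, neg_mul,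
    Finset.sum_neg_distrib]
  ring

theorem sum_inner_J_fr_mul_phi (X Y : EV n) :
    ∑ l, ⟪a.J x X, fr n l⟫_ℝ * a.phi x Y (fr n l) = finner (a.covOmega x X) (a.covOmega x Y) := by
  simp only [phi_eq_sum, finner_covOmega, Finset.mul_sum]
  rw [← Finset.sum_comm_cycle]
  refine Finset.sum_congr rfl fun k _ => Finset.sum_congr rfl fun l _ => ?_
  rw [← a.J_isom x X, ← sum_inner_fr_mul_inner_fr (a.J x X), Finset.sum_mul, Finset.mul_sum]
  exact Finset.sum_congr rfl fun m _ => by ring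

theorem two_mul_finner_rho_phi :
    2 * finner (a.rho x) (a.phi x)
      = ∑ k, finner (a.covOmega x (a.RicP x (fr n k))) (a.covOmega x (fr n k)) := by
  rw [finner, ← mul_assoc, mul_inv_cancel₀ two_ne_zero, one_mul]
  exact Finset.sum_congr rfl fun k _ => a.sum_inner_J_fr_mul_phi x _ _

theorem sum_inner_J_vphi_mul_inner_J_vphi (Y Z : EV n) :
    ∑ k, ∑ l, ⟪Y, a.J x (a.vphi x (fr n l) (fr n k))⟫_ℝ * ⟪Z, a.J x (a.vphi x (fr n l) (fr n k))⟫_ℝ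
      = ∑ k, ∑ l, ⟪Y, a.vphi x (fr n l) (fr n k)⟫_ℝ * ⟪Z, a.vphi x (fr n l) (fr n k)⟫_ℝ := by
  have h := a.finner_covOmega_J_J x Y Z
  rw [finner_covOmega, finner_covOmega] at h
  simp only [inner_J_right, neg_mul_neg]
  exact mul_left_cancel₀ (inv_ne_zero two_ne_zero) h

def vphiQuad (A : EV n → EV n) : ℝ :=
  ∑ k, ∑ l, ⟪A (a.vphi x (fr n l) (fr n k)), a.vphi x (fr n l) (fr n k)⟫_ℝ

theorem sum_finner_covOmega_apply_fr {A : EV n → EV n} (hA : ∀ u v, ⟪A u, v⟫_ℝ = ⟪u, A v⟫_ℝ) :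
    ∑ k, finner (a.covOmega x (A (fr n k))) (a.covOmega x (fr n k)) = 2⁻¹ * a.vphiQuad x A := by
  simp only [finner_covOmega, vphiQuad, ← Finset.mul_sum]
  rw [Finset.sum_comm]
  refine congrArg _ (Finset.sum_congr rfl fun k _ => ?_)
  rw [Finset.sum_comm]
  exact Finset.sum_congr rfl fun l _ => sum_inner_fr_apply_mul_inner_fr hA _

theorem sum_inner_apply_J_vphi {A : EV n → EV n} (hA : ∀ u v, ⟪A u, v⟫_ℝ = ⟪u, A v⟫_ℝ) :
    ∑ k, ∑ l, ⟪A (a.J x (a.vphi x (fr n l) (fr n k))), a.J x (a.vphi x (fr n l) (fr n k))⟫_ℝ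
      = a.vphiQuad x A := by
  simp only [vphiQuad, ← sum_inner_fr_apply_mul_inner_fr hA]
  rw [Finset.sum_comm_cycle]
  conv_rhs => rw [Finset.sum_comm_cycle]
  exact Finset.sum_congr rfl fun k _ => a.sum_inner_J_vphi_mul_inner_J_vphi x (A (fr n k)) (fr n k)

theorem vphiQuad_RicP : a.vphiQuad x (a.RicP x) = a.vphiQuad x (a.Ric x) := by
  simp only [vphiQuad, inner_RicP, ← Finset.mul_sum, Finset.sum_add_distrib]
  rw [a.sum_inner_apply_J_vphi x (a.inner_Ric_comm x), vphiQuad]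
  ring

end AKManifold

open AKManifold in
/-- For any almost Kähler manifold `(M,g,J)`:
`2⟨ρ, φ⟩ = ⟨∇_{Ric(X_k)} Ω, ∇_{X^k} Ω⟩` (summation over `k`). -/
theorem stmt0 {n : ℕ} {M : Type} [TopologicalSpace M] [MeasurableSpace M]
    (a : AKManifold n M) (x : M) :
    2 * finner (a.rho x) (a.phi x)
      = ∑ k, finner (a.covOmega x (a.Ric x (fr n k))) (a.covOmega x (fr n k)) := by
  rw [a.two_mul_finner_rho_phi x, a.sum_finner_covOmega_apply_fr x (a.inner_RicP_comm x),
    a.sum_finner_covOmega_apply_fr x (a.inner_Ric_comm x), a.vphiQuad_RicP x]
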